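/- For all reals 0 < r₂ < r₁ < r < 1, setting R_j = log((1+r_j)/(1−r_j)) for j ∈ {1,2}, one has | ∫_{r₂}^{r₁} log(r/ρ) · 4ρ/(1−ρ²)² dρ − (R₁ − R₂) | ≤ 3. -/

import Mathlib

/-!
Writing `4ρ/(1-ρ²)² = d/dρ (2ρ²/(1-ρ²))` and integrating by parts against `log (r/ρ)` gives the
primitive `2ρ² log (r/ρ)/(1-ρ²) - log (1-ρ²)`. Since `log (1-ρ²) = log (1+ρ) + log (1-ρ)`, this
primitive differs from the hyperbolic radius `log ((1+ρ)/(1-ρ))` by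
`2ρ² log (r/ρ)/(1-ρ²) - 2 log (1+ρ)`, which lies in `[-2, 1]` for `0 < ρ ≤ r ≤ 1`: the first term is
in `[0, 1]` because `log (r/ρ) ≤ 1/ρ - 1`, and `0 ≤ log (1+ρ) ≤ ρ < 1`.
-/

open Real

noncomputable def logWeightPrimitive (r x : ℝ) : ℝ :=
  2 * x ^ 2 * log (r / x) / (1 - x ^ 2) - log (1 - x ^ 2)

theorem hasDerivAt_logWeightPrimitive {r x : ℝ} (hr : r ≠ 0) (hx : x ≠ 0) (hx1 : 1 - x ^ 2 ≠ 0) :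
    HasDerivAt (logWeightPrimitive r) (log (r / x) * (4 * x / (1 - x ^ 2) ^ 2)) x := by
  have hsq : HasDerivAt (fun y : ℝ => 1 - y ^ 2) (-(2 * x)) x := by
    simpa using (hasDerivAt_pow 2 x).const_sub 1
  have hlog : HasDerivAt (fun y : ℝ => log (r / y)) (-x⁻¹) x := by
    have h := (hasDerivAt_const x (log r)).sub (hasDerivAt_log hx)
    refine (h.congr_of_eventuallyEq ?_).congr_deriv (zero_sub _)
    filter_upwards [isOpen_ne.mem_nhds hx] with y hy
    exact log_div hr hy
  have h := ((((hasDerivAt_pow 2 x).const_mul 2).mul hlog).div hsq hx1).sub (hsq.log hx1)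
  refine h.congr_deriv ?_
  simp only [Pi.mul_apply]
  field_simp
  ring

theorem integral_log_div_mul_weight {r a b : ℝ} (hr : r ≠ 0) (ha : 0 < a) (hab : a ≤ b)
    (hb : b < 1) :
    ∫ ρ in a..b, log (r / ρ) * (4 * ρ / (1 - ρ ^ 2) ^ 2) =
      logWeightPrimitive r b - logWeightPrimitive r a := by
  have hmem : ∀ ρ ∈ Set.uIcc a b, ρ ≠ 0 ∧ 1 - ρ ^ 2 ≠ 0 := by
    intro ρ hρ
    rw [Set.uIcc_of_le hab] at hρ
    have hρ0 : 0 < ρ := ha.trans_le hρ.1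
    have hρ1 : ρ < 1 := hρ.2.trans_lt hb
    exact ⟨hρ0.ne', by nlinarith⟩
  refine intervalIntegral.integral_eq_sub_of_hasDerivAt
    (fun ρ hρ => hasDerivAt_logWeightPrimitive hr (hmem ρ hρ).1 (hmem ρ hρ).2) ?_
  refine ContinuousOn.intervalIntegrable ?_
  refine ContinuousOn.mul ?_ ?_
  · exact (continuousOn_const.div continuousOn_id fun ρ hρ => (hmem ρ hρ).1).log
      fun ρ hρ => div_ne_zero hr (hmem ρ hρ).1
  · exact continuousOn_of_forall_continuousAt fun ρ hρ =>
      ContinuousAt.div (by fun_prop) (by fun_prop) (pow_ne_zero 2 (hmem ρ hρ).2)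

theorem logWeightPrimitive_sub_log {r x : ℝ} (hx₀ : -1 < x) (hx₁ : x < 1) :
    logWeightPrimitive r x - log ((1 + x) / (1 - x)) =
      2 * x ^ 2 * log (r / x) / (1 - x ^ 2) - 2 * log (1 + x) := by
  have hp : 1 + x ≠ 0 := by linarith
  have hm : 1 - x ≠ 0 := by linarith
  rw [logWeightPrimitive, log_div hp hm, show (1 : ℝ) - x ^ 2 = (1 + x) * (1 - x) by ring,
    log_mul hp hm]
  ring

theorem mul_log_div_mem_Icc {r x : ℝ} (hx : 0 < x) (hxr : x ≤ r) (hr : r ≤ 1) (hx1 : x < 1) :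
    2 * x ^ 2 * log (r / x) / (1 - x ^ 2) ∈ Set.Icc 0 1 := by
  have hq : 0 < 1 - x ^ 2 := by nlinarith
  have hlog0 : 0 ≤ log (r / x) := log_nonneg ((one_le_div hx).mpr hxr)
  have hlog1 : log (r / x) ≤ (1 - x) / x :=
    calc log (r / x) ≤ log (1 / x) := log_le_log (div_pos (hx.trans_le hxr) hx) (by gcongr)
      _ ≤ 1 / x - 1 := log_le_sub_one_of_pos (by positivity)
      _ = (1 - x) / x := by field_simp
  refine ⟨div_nonneg (mul_nonneg (by positivity) hlog0) hq.le, (div_le_one hq).mpr ?_⟩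
  calc 2 * x ^ 2 * log (r / x) ≤ 2 * x ^ 2 * ((1 - x) / x) := by gcongr
    _ = 1 - x ^ 2 - (1 - x) ^ 2 := by field_simp; ring
    _ ≤ 1 - x ^ 2 := by nlinarith

theorem logWeightPrimitive_sub_log_mem_Icc {r x : ℝ} (hx : 0 < x) (hxr : x ≤ r) (hr : r ≤ 1)
    (hx1 : x < 1) :
    logWeightPrimitive r x - log ((1 + x) / (1 - x)) ∈ Set.Icc (-2) 1 := by
  rw [logWeightPrimitive_sub_log (by linarith) hx1]
  obtain ⟨h₀, h₁⟩ := mul_log_div_mem_Icc hx hxr hr hx1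
  have hlog0 : 0 ≤ log (1 + x) := log_nonneg (by linarith)
  have hlog1 : log (1 + x) ≤ x := by linarith [log_le_sub_one_of_pos (by linarith : 0 < 1 + x)]
  constructor <;> linarith

theorem stmt_5 (r r₁ r₂ : ℝ) (h2 : 0 < r₂) (h21 : r₂ < r₁) (h1r : r₁ < r) (hr : r < 1) :
    |(∫ ρ in r₂..r₁, Real.log (r / ρ) * (4 * ρ / (1 - ρ ^ 2) ^ 2))
      - (Real.log ((1 + r₁) / (1 - r₁)) - Real.log ((1 + r₂) / (1 - r₂)))| ≤ 3 := by
  have hr₁ : r₁ < 1 := h1r.trans hr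
  rw [integral_log_div_mul_weight (h2.trans (h21.trans h1r)).ne' h2 h21.le hr₁]
  obtain ⟨e₁, e₁'⟩ := logWeightPrimitive_sub_log_mem_Icc (h2.trans h21) h1r.le hr.le hr₁
  obtain ⟨e₂, e₂'⟩ :=
    logWeightPrimitive_sub_log_mem_Icc h2 (h21.trans h1r).le hr.le (h21.trans hr₁)
  rw [abs_le]
  constructor <;> linarith
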